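/- Let n ≥ 1 and let w : Fin (2n) → Fin 2 be a Dyck word (in particular balanced). For 0 ≤ r ≤ 2n, the rotation of w by r is again a Dyck word if and only if S_r(w) = 0, i.e. if and only if r is a return to zero of w (a boundary between indecomposable Dyck factors). -/

import Mathlib

/-!
Write `S` for the prefix sums of `w` and `S'` for those of its rotation by `r`. For
`j + r ≤ L` one has `S'_j = S_{r+j} - S_r`, and past the end of the word the sum wraps
around: `S'_j = S_L - S_r + S_{j+r-L}`. At `j = L - r` this gives `S'_j = -S_r`, which
forces `S_r = 0` if both words are Dyck; conversely, if `S_r = 0` every `S'_j` is a prefix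
sum of `w`.
-/

/-- The rotation of a word `w : Fin L → A` by `r` positions. -/
def rotate {L : ℕ} {A : Type*} (r : ℕ) (w : Fin L → A) : Fin L → A :=
  fun i => w ⟨((i : ℕ) + r) % L, Nat.mod_lt _ (Nat.lt_of_le_of_lt (Nat.zero_le _) i.isLt)⟩

/-- The `j`-th prefix sum of a binary word, where letter `0` counts `+1`
and letter `1` counts `-1`. -/
def prefixSum {L : ℕ} (w : Fin L → Fin 2) (j : ℕ) : ℤ :=
  ∑ i ∈ Finset.range j, if h : i < L then (if w ⟨i, h⟩ = 0 then 1 else -1) else 0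

/-- `w` is a Dyck word: it is balanced (total sum zero) and all its prefix sums are
nonnegative. -/
def isDyck {L : ℕ} (w : Fin L → Fin 2) : Prop :=
  prefixSum w L = 0 ∧ ∀ j ≤ L, 0 ≤ prefixSum w j

open Finset

def letterSign {L : ℕ} (w : Fin L → Fin 2) (i : ℕ) : ℤ :=
  if h : i < L then (if w ⟨i, h⟩ = 0 then 1 else -1) else 0

section

variable {L : ℕ} (w : Fin L → Fin 2)

lemma prefixSum_eq_sum_letterSign (j : ℕ) : prefixSum w j = ∑ i ∈ range j, letterSign w i := rfl

lemma prefixSum_add (a b : ℕ) :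
    prefixSum w (a + b) = prefixSum w a + ∑ i ∈ range b, letterSign w (a + i) :=
  sum_range_add _ _ _

lemma letterSign_rotate (r : ℕ) {i : ℕ} (hi : i < L) :
    letterSign (rotate r w) i = letterSign w ((i + r) % L) := by
  rw [letterSign, letterSign, dif_pos hi, dif_pos (Nat.mod_lt _ (by omega))]
  rfl

lemma prefixSum_rotate_of_add_le {r j : ℕ} (hjr : j + r ≤ L) :
    prefixSum (rotate r w) j = prefixSum w (r + j) - prefixSum w r := by
  rw [prefixSum_add, prefixSum_eq_sum_letterSign, add_sub_cancel_left]
  refine sum_congr rfl fun i hi => ?_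
  have hi : i < j := mem_range.mp hi
  rw [letterSign_rotate w r (by omega), Nat.mod_eq_of_lt (by omega), add_comm]

lemma prefixSum_rotate_of_le_add {r j : ℕ} (hr : r ≤ L) (hj : j ≤ L) (hjr : L ≤ j + r) :
    prefixSum (rotate r w) j = prefixSum w L - prefixSum w r + prefixSum w (j + r - L) := by
  obtain ⟨m, rfl⟩ : ∃ m, j = (L - r) + m := ⟨j + r - L, by omega⟩
  have hwrap : ∑ i ∈ range m, letterSign (rotate r w) (L - r + i) = prefixSum w m := by
    rw [prefixSum_eq_sum_letterSign]
    refine sum_congr rfl fun i hi => ?_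
    have hi : i < m := mem_range.mp hi
    rw [letterSign_rotate w r (by omega), show L - r + i + r = i + L by omega,
      Nat.add_mod_right, Nat.mod_eq_of_lt (by omega)]
  rw [prefixSum_add, hwrap, prefixSum_rotate_of_add_le w (by omega),
    show r + (L - r) = L by omega, show L - r + m + r - L = m by omega]

end

theorem rotation_of_dyck_isDyck_iff_general
    (n : ℕ) (w : Fin (2 * n) → Fin 2) (hw : isDyck w)
    (r : ℕ) (hr : r ≤ 2 * n) :
    isDyck (rotate r w) ↔ prefixSum w r = 0 := by
  obtain ⟨hbal, hnonneg⟩ := hw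
  constructor
  · rintro ⟨-, hnonneg'⟩
    have hneg : 0 ≤ -prefixSum w r := by
      simpa [prefixSum_rotate_of_add_le w (show 2 * n - r + r ≤ 2 * n by omega),
        show r + (2 * n - r) = 2 * n by omega, hbal] using hnonneg' (2 * n - r) (by omega)
    linarith [hnonneg r hr]
  · intro hr0
    refine ⟨?_, fun j hj => ?_⟩
    · rw [prefixSum_rotate_of_le_add w hr le_rfl (by omega), hbal, hr0,
        show 2 * n + r - 2 * n = r by omega, hr0, add_zero, sub_self]
    · rcases le_total (j + r) (2 * n) with hjr | hjr
      · rw [prefixSum_rotate_of_add_le w hjr, hr0, sub_zero]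
        exact hnonneg _ (by omega)
      · rw [prefixSum_rotate_of_le_add w hr hj hjr, hbal, hr0, sub_zero, zero_add]
        exact hnonneg _ (by omega)

/-- For a Dyck word `w` of length `2n` (in particular balanced), the rotation of `w` by
`r ≤ 2n` is again a Dyck word iff `S_r(w) = 0`, i.e. iff `r` is a return to zero of `w`
(a boundary between indecomposable Dyck factors). -/
theorem rotation_of_dyck_isDyck_iff
    (n : ℕ) (hn : 1 ≤ n) (w : Fin (2 * n) → Fin 2) (hw : isDyck w)
    (r : ℕ) (hr : r ≤ 2 * n) :
    isDyck (rotate r w) ↔ prefixSum w r = 0 :=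
  rotation_of_dyck_isDyck_iff_general n w hw r hr
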